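/- arXiv:2504.12479 — 3 statements merged into one kernel-verified Lean document; each statement's English description precedes it below -/
import Mathlib

section
/- The image of the embedding I_S : Pert_{n,k} → Def_{n,k} is exactly the subring of S_k-invariant elements of Def_{n,k}; that is, every element p of Def_{n,k} with σ(p)=p for all σ in S_k lies in the image of I_S. -/
open MvPolynomial

noncomputable section

variable (K : Type*) [Field K]

/-- The ideal of `K[λ^1,…,λ^n]` generated by all products of `k+1` generators. -/
def pertIdeal (n k : ℕ) : Ideal (MvPolynomial (Fin n) K) :=
  Ideal.span {p | ∃ f : Fin (k + 1) → Fin n, p = ∏ j, X (f j)}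

/-- `Pert_{n,k} = K[λ^1,…,λ^n]/(monomials of degree k+1)`. -/
abbrev Pert (n k : ℕ) := MvPolynomial (Fin n) K ⧸ pertIdeal K n k

/-- The ideal of `K[ε_i^α]` generated by `ε_i^α ε_i^β` for each fixed `i`. -/
def defIdeal (n k : ℕ) : Ideal (MvPolynomial (Fin k × Fin n) K) :=
  Ideal.span {p | ∃ (i : Fin k) (a b : Fin n), p = X (i, a) * X (i, b)}

/-- `Def_{n,k} = K[ε_i^α : 1≤i≤k, 1≤α≤n]/(ε_i^α ε_i^β)`. -/
abbrev DefR (n k : ℕ) := MvPolynomial (Fin k × Fin n) K ⧸ defIdeal K n k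

/-- The generator `λ^a` of `Pert_{n,k}`. -/
def lam {n k : ℕ} (a : Fin n) : Pert K n k := Ideal.Quotient.mk _ (X a)

/-- The generator `ε_i^a` of `Def_{n,k}`. -/
def eps {n k : ℕ} (i : Fin k) (a : Fin n) : DefR K n k := Ideal.Quotient.mk _ (X (i, a))

/-! Reynolds averaging: an invariant `p = [f]` is `(1/k!) ∑_σ σ p`, and `∑_σ σ p` is a combination
of orbit sums `∑_σ ∏_{(i,a) ∈ A} ε_{σ i}^a` of the monomials of `f`. Because `ε_i^a ε_i^b = 0`, only
monomials using each row `i` at most once survive, and for those multiplying by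
`E_a = ∑_i ε_i^a` adds a new row: `E_{a₀} · orbitSum A = (k - |A|) · orbitSum (A ∪ {(i₀, a₀)})`.
Since `k - |A|` is invertible in characteristic zero, induction on `A` puts every orbit sum in the
subalgebra generated by the `E_a = I_S(λ^a)`. -/

variable {K}

open Finset Equiv

theorem Subalgebra.mem_of_nsmul_mem {F A : Type*} [Field F] [CharZero F] [Semiring A]
    [Algebra F A] (S : Subalgebra F A) {m : ℕ} (hm : m ≠ 0) {x : A} (hx : m • x ∈ S) : x ∈ S := by
  rw [← Nat.cast_smul_eq_nsmul F] at hx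
  exact (S.toSubmodule.smul_mem_iff (Nat.cast_ne_zero.2 hm)).1 hx

namespace Equiv.Perm

variable {α : Type*} [DecidableEq α]

def swapMove (i₀ : α) (x : Perm α × α) : Perm α × α :=
  (swap x.2 (x.1 i₀) * x.1, x.1 i₀)

theorem swapMove_fst_apply_self (i₀ : α) (x : Perm α × α) : (swapMove i₀ x).1 i₀ = x.2 := by
  simp [swapMove]

theorem swapMove_fst_apply_of_ne {i₀ b : α} {x : Perm α × α} (hb : b ≠ i₀) (hx : x.1 b ≠ x.2) :
    (swapMove i₀ x).1 b = x.1 b :=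
  swap_apply_of_ne_of_ne hx (x.1.injective.ne hb)

theorem swapMove_swapMove (i₀ : α) (x : Perm α × α) : swapMove i₀ (swapMove i₀ x) = x := by
  obtain ⟨σ, i⟩ := x
  simp [swapMove, swap_comm, ← mul_assoc]

theorem swapMove_avoids {i₀ : α} {B : Finset α} (hi₀ : i₀ ∉ B) {x : Perm α × α}
    (hx : ∀ b ∈ B, x.1 b ≠ x.2) : ∀ b ∈ B, (swapMove i₀ x).1 b ≠ (swapMove i₀ x).2 := by
  intro b hb
  rw [swapMove_fst_apply_of_ne (ne_of_mem_of_not_mem hb hi₀) (hx b hb)]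
  exact x.1.injective.ne (ne_of_mem_of_not_mem hb hi₀)

end Equiv.Perm

section RowSquareZero

variable {R α β : Type*} [CommRing R] {e : α → β → R}

theorem prod_eq_zero_of_fst_eq (he : ∀ i a b, e i a * e i b = 0) (g : α → α)
    {A : Finset (α × β)} {q q' : α × β} (hq : q ∈ A) (hq' : q' ∈ A) (hne : q ≠ q')
    (hfst : q.1 = q'.1) : ∏ r ∈ A, e (g r.1) r.2 = 0 := by
  classical
  rw [← mul_prod_erase _ _ hq, ← mul_prod_erase _ _ (mem_erase.2 ⟨hne.symm, hq'⟩), ← mul_assoc,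
    hfst, he, zero_mul]

variable [Fintype α] [DecidableEq α] [DecidableEq β]

def orbitSum (e : α → β → R) (A : Finset (α × β)) : R :=
  ∑ σ : Perm α, ∏ q ∈ A, e (σ q.1) q.2

/- The pairs `(σ, i)` with `i ∉ σ(fst A)` index the nonzero terms of the left side; `swapMove`
permutes them and turns the term of `(σ, i)` into the `insert q₀ A`-term of its first component,
so every `τ` is counted once for each `i ∉ τ(fst A)`. -/
theorem sum_mul_orbitSum (he : ∀ i a b, e i a * e i b = 0) {A : Finset (α × β)}
    {q₀ : α × β} (hq₀ : q₀.1 ∉ A.image Prod.fst) :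
    (∑ i, e i q₀.2) * orbitSum e A =
      (Fintype.card α - #(A.image Prod.fst)) • orbitSum e (insert q₀ A) := by
  set B := A.image Prod.fst
  set P := (univ : Finset (Perm α × α)).filter fun x => ∀ b ∈ B, x.1 b ≠ x.2
  set F : Perm α → R := fun τ => ∏ q ∈ insert q₀ A, e (τ q.1) q.2
  have hq₀A : q₀ ∉ A := fun h => hq₀ (mem_image_of_mem _ h)
  have hB : ∀ q ∈ A, q.1 ≠ q₀.1 := fun q hq h => hq₀ (h ▸ mem_image_of_mem _ hq)
  have hP : ∀ x ∈ P, Perm.swapMove q₀.1 x ∈ P := fun x hx =>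
    mem_filter.2 ⟨mem_univ _, Perm.swapMove_avoids hq₀ (mem_filter.1 hx).2⟩
  calc (∑ i, e i q₀.2) * orbitSum e A
      = ∑ x : Perm α × α, e x.2 q₀.2 * ∏ q ∈ A, e (x.1 q.1) q.2 := by
        simp only [orbitSum, mul_sum, sum_mul, Fintype.sum_prod_type]
    _ = ∑ x ∈ P, e x.2 q₀.2 * ∏ q ∈ A, e (x.1 q.1) q.2 := by
        refine (sum_filter_of_ne fun x _ hx => ?_).symm
        intro b hb hcol
        obtain ⟨q, hq, rfl⟩ := mem_image.1 hb
        rw [← mul_prod_erase _ _ hq, hcol, ← mul_assoc, he, zero_mul] at hx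
        exact hx rfl
    _ = ∑ x ∈ P, F (Perm.swapMove q₀.1 x).1 := by
        refine sum_congr rfl fun x hx => ?_
        simp only [F, prod_insert hq₀A, Perm.swapMove_fst_apply_self]
        congr 1
        refine prod_congr rfl fun q hq => ?_
        rw [Perm.swapMove_fst_apply_of_ne (hB q hq)
          ((mem_filter.1 hx).2 q.1 (mem_image_of_mem _ hq))]
    _ = ∑ x ∈ P, F x.1 :=
        sum_nbij' _ _ hP hP (fun x _ => Perm.swapMove_swapMove _ x)
          (fun x _ => Perm.swapMove_swapMove _ x) fun _ _ => rfl
    _ = ∑ σ : Perm α, #(B.image σ)ᶜ • F σ := by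
        rw [sum_filter, Fintype.sum_prod_type]
        refine sum_congr rfl fun σ _ => ?_
        dsimp only
        rw [← sum_filter, sum_const]
        congr 2
        ext i
        simp [eq_comm]
    _ = (Fintype.card α - #B) • orbitSum e (insert q₀ A) := by
        simp only [card_compl, card_image_of_injective _ (Equiv.injective _), orbitSum, smul_sum, F]

variable [CharZero K] [Algebra K R]

theorem orbitSum_mem_adjoin (he : ∀ i a b, e i a * e i b = 0) (A : Finset (α × β)) :
    orbitSum e A ∈ Algebra.adjoin K (Set.range fun a => ∑ i, e i a) := by
  induction A using Finset.induction_on with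
  | empty =>
    simp only [orbitSum, prod_empty, sum_const]
    exact nsmul_mem (one_mem _) _
  | insert q₀ A hq₀A ih =>
    by_cases hcol : q₀.1 ∈ A.image Prod.fst
    · obtain ⟨q, hq, hfst⟩ := mem_image.1 hcol
      have hq₀q : q₀ ≠ q := fun h => hq₀A (h ▸ hq)
      have hzero : orbitSum e (insert q₀ A) = 0 := sum_eq_zero fun σ _ =>
        prod_eq_zero_of_fst_eq he σ (mem_insert_self q₀ A) (mem_insert_of_mem hq) hq₀q hfst.symm
      rw [hzero]
      exact zero_mem _
    · refine Subalgebra.mem_of_nsmul_mem _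
        (Nat.sub_ne_zero_of_lt (card_lt_univ_of_notMem hcol)) ?_
      rw [← sum_mul_orbitSum he hcol]
      exact mul_mem (Algebra.subset_adjoin ⟨q₀.2, rfl⟩) ih

theorem sum_perm_finsuppProd_mem_adjoin (he : ∀ i a b, e i a * e i b = 0) (u : α × β →₀ ℕ) :
    ∑ σ : Perm α, u.prod (fun q m => e (σ q.1) q.2 ^ m) ∈
      Algebra.adjoin K (Set.range fun a => ∑ i, e i a) := by
  by_cases hu : ∀ q ∈ u.support, u q = 1
  · have hsqfree (σ : Perm α) :
        u.prod (fun q m => e (σ q.1) q.2 ^ m) = ∏ q ∈ u.support, e (σ q.1) q.2 :=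
      prod_congr rfl fun q hq => by simp only [hu q hq, pow_one]
    simp_rw [hsqfree]
    exact orbitSum_mem_adjoin he u.support
  · push Not at hu
    obtain ⟨q, hq, hq1⟩ := hu
    have h2 : 2 ≤ u q := by
      have := Finsupp.mem_support_iff.1 hq
      omega
    have hzero (σ : Perm α) : e (σ q.1) q.2 ^ u q = 0 :=
      pow_eq_zero_of_le h2 (by rw [sq, he])
    rw [sum_eq_zero fun σ _ => prod_eq_zero hq (hzero σ)]
    exact zero_mem _

theorem sum_perm_aeval_mem_adjoin (he : ∀ i a b, e i a * e i b = 0)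
    (f : MvPolynomial (α × β) K) :
    ∑ σ : Perm α, aeval (fun q : α × β => e (σ q.1) q.2) f ∈
      Algebra.adjoin K (Set.range fun a => ∑ i, e i a) := by
  induction f using MvPolynomial.induction_on' with
  | monomial u c =>
    simp only [aeval_monomial, ← mul_sum]
    exact mul_mem (Subalgebra.algebraMap_mem _ c) (sum_perm_finsuppProd_mem_adjoin he u)
  | add f g hf hg => simpa only [map_add, sum_add_distrib] using add_mem hf hg

end RowSquareZero

theorem eps_mul_eps_self {n k : ℕ} (i : Fin k) (a b : Fin n) : eps K i a * eps K i b = 0 := by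
  rw [eps, eps, ← map_mul, Ideal.Quotient.eq_zero_iff_mem]
  exact Ideal.subset_span ⟨i, a, b, rfl⟩

/-- the image of `I_S : Pert_{n,k} → Def_{n,k}` is exactly the subring of
`S_k`-invariant elements: any `p` fixed by every `σ ∈ S_k` lies in the image of `I_S`. -/
theorem stmt3 (n k : ℕ) [CharZero K] (φ : Pert K n k →ₐ[K] DefR K n k)
    (hφ : ∀ a : Fin n, φ (lam K a) = ∑ i : Fin k, eps K i a)
    (action : Equiv.Perm (Fin k) → (DefR K n k →ₐ[K] DefR K n k))
    (haction : ∀ (σ : Equiv.Perm (Fin k)) (i : Fin k) (a : Fin n),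
      action σ (eps K i a) = eps K (σ i) a)
    (p : DefR K n k) (hp : ∀ σ : Equiv.Perm (Fin k), action σ p = p) :
    p ∈ Set.range φ := by
  obtain ⟨f, rfl⟩ := Ideal.Quotient.mk_surjective p
  have hact (σ : Perm (Fin k)) :
      action σ (Ideal.Quotient.mk _ f) = aeval (fun q : Fin k × Fin n => eps K (σ q.1) q.2) f :=
    congr($(algHom_ext (f := (action σ).comp (Ideal.Quotient.mkₐ K _)) (g := aeval _)
      fun q => by rw [AlgHom.comp_apply, aeval_X]; exact haction σ q.1 q.2) f)
  have hadj : Algebra.adjoin K (Set.range fun a => ∑ i, eps K i a) ≤ φ.range :=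
    Algebra.adjoin_le (by rintro _ ⟨a, rfl⟩; exact ⟨lam K a, hφ a⟩)
  have hsum := hadj (sum_perm_aeval_mem_adjoin eps_mul_eps_self f)
  simp only [← hact, hp, sum_const, card_univ] at hsum
  exact (AlgHom.mem_range φ).1 (Subalgebra.mem_of_nsmul_mem _ Fintype.card_ne_zero hsum)
end
end

section
/- (Tangent-space recurrence) Let F be a polynomial on K^N, and let p = r + Σ_α ε^α t_α solve F(p)=0 over a ring where the ε^α pairwise multiply to zero, with r, t_α defined over the subring not involving ε. Assume ⟨∇F(r), ∇F(r)⟩ is invertible. If s and u_α satisfy ⟨s, ∇F(r)⟩ = 0 and ⟨u_α, ∇F(r)⟩ = 0, then q = s − Σ_α ε^α · (∂²F(r)(s,t_α)/⟨∇F(r),∇F(r)⟩)·∇F(r) + Σ_α ε^α u_α satisfies ⟨q, ∇F(p)⟩ = 0. -/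
open MvPolynomial

noncomputable section

variable (K : Type*) [Field K]

lemma pderiv_comm' {K : Type*} [CommSemiring K] {σ : Type*} [DecidableEq σ]
    (i j : σ) (f : MvPolynomial σ K) :
    pderiv i (pderiv j f) = pderiv j (pderiv i f) := by
  induction f using MvPolynomial.induction_on' with
  | monomial m a =>
    rcases eq_or_ne i j with rfl | h
    · rfl
    · simp only [pderiv_monomial]
      rw [tsub_right_comm]
      congr 1
      rw [Finsupp.tsub_apply, Finsupp.tsub_apply, Finsupp.single_apply, Finsupp.single_apply,
        if_neg h, if_neg (Ne.symm h)]
      simp only [Nat.sub_zero]; ring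
  | add p q hp hq => simp [hp, hq]

lemma taylor1 {K : Type*} [CommRing K] {N : ℕ} {A : Type*} [CommRing A] [Algebra K A]
    (f δ : Fin N → A) (hδ : ∀ i j, δ i * δ j = 0) (P : MvPolynomial (Fin N) K) :
    aeval (fun i => f i + δ i) P = aeval f P + ∑ j, δ j * aeval f (pderiv j P) := by
  induction P using MvPolynomial.induction_on with
  | C a => simp
  | add p q hp hq =>
    simp only [map_add, hp, hq, mul_add, Finset.sum_add_distrib]; ring
  | mul_X p i hp =>
    have hS : (∑ j, δ j * aeval f (pderiv j p)) * δ i = 0 := by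
      rw [Finset.sum_mul]
      refine Finset.sum_eq_zero fun j _ => ?_
      rw [mul_comm (δ j) _, mul_assoc, hδ, mul_zero]
    have hXi : ∑ j, δ j * (aeval f p * aeval f (pderiv j (X i : MvPolynomial (Fin N) K)))
        = δ i * aeval f p := by
      rw [Finset.sum_eq_single i]
      · rw [pderiv_X_self]; simp [mul_comm]
      · intro j _ hj
        rw [pderiv_X_of_ne (Ne.symm hj)]
        simp
      · simp
    calc aeval (fun k => f k + δ k) (p * X i)
        = (aeval f p + ∑ j, δ j * aeval f (pderiv j p)) * (f i + δ i) := by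
          rw [map_mul, hp, aeval_X]
      _ = aeval f p * f i + aeval f p * δ i + (∑ j, δ j * aeval f (pderiv j p)) * f i := by
          rw [add_mul, mul_add, mul_add, hS, add_zero]
      _ = aeval f p * f i + ∑ j, δ j * (aeval f (pderiv j p) * f i
            + aeval f p * aeval f (pderiv j (X i : MvPolynomial (Fin N) K))) := by
          simp only [mul_add, Finset.sum_add_distrib, hXi, Finset.sum_mul, mul_assoc]
          ring
      _ = aeval f (p * X i) + ∑ j, δ j * aeval f (pderiv j (p * X i)) := by
          simp only [pderiv_mul, map_add, map_mul, aeval_X]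

/-- tangent-space recurrence: if `p = r + Σ_α ε^α t_α` solves `F(p) = 0`
over `R[ε^1,…,ε^n]/(ε^α ε^β)`, `⟨∇F(r),∇F(r)⟩` is invertible (with inverse `w`), and
`⟨s,∇F(r)⟩ = 0`, `⟨u_α,∇F(r)⟩ = 0`, then
`q = s − Σ_α ε^α (∂²F(r)(s,t_α)/⟨∇F(r),∇F(r)⟩)·∇F(r) + Σ_α ε^α u_α`
satisfies `⟨q, ∇F(p)⟩ = 0`. -/
theorem stmt15 (n N : ℕ) [CharZero K] (F : MvPolynomial (Fin N) K)
    (R A : Type*) [CommRing R] [Algebra K R] [CommRing A] [Algebra K A] [Algebra R A]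
    [IsScalarTower K R A]
    (ε : Fin n → A) (hε : ∀ α β : Fin n, ε α * ε β = 0)
    (r s : Fin N → R) (t u : Fin n → Fin N → R)
    (w : R) (hw : w * ∑ i : Fin N, aeval r (pderiv i F) * aeval r (pderiv i F) = 1)
    (hp : aeval
        (fun i : Fin N => algebraMap R A (r i) + ∑ α : Fin n, ε α * algebraMap R A (t α i))
        F = 0)
    (hs : ∑ i : Fin N, s i * aeval r (pderiv i F) = 0)
    (hu : ∀ α : Fin n, ∑ i : Fin N, u α i * aeval r (pderiv i F) = 0) :
    ∑ i : Fin N,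
      (algebraMap R A (s i)
        - ∑ α : Fin n, ε α * algebraMap R A
            ((∑ i' : Fin N, ∑ j : Fin N, aeval r (pderiv i' (pderiv j F)) * s i' * t α j)
              * w * aeval r (pderiv i F))
        + ∑ α : Fin n, ε α * algebraMap R A (u α i))
      * aeval
          (fun i' : Fin N =>
            algebraMap R A (r i') + ∑ α : Fin n, ε α * algebraMap R A (t α i'))
          (pderiv i F)
      = 0 := by
  classical
  -- abbreviations
  set D : Fin N → R := fun i => aeval r (pderiv i F) with hDdef
  set M : Fin n → R := fun α => ∑ i' : Fin N, ∑ j : Fin N,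
      aeval r (pderiv i' (pderiv j F)) * s i' * t α j with hMdef
  set δ : Fin N → A := fun i => ∑ α : Fin n, ε α * algebraMap R A (t α i) with hδdef
  have hnil : ∀ (x y : Fin n → A), (∑ α, ε α * x α) * (∑ β, ε β * y β) = 0 := by
    intro x y
    rw [Finset.sum_mul_sum]
    refine Finset.sum_eq_zero fun α _ => Finset.sum_eq_zero fun β _ => ?_
    rw [mul_mul_mul_comm, hε, zero_mul]
  have hδnil : ∀ i j, δ i * δ j = 0 := fun i j => hnil _ _
  have halg : ∀ Q : MvPolynomial (Fin N) K,
      aeval (fun i => algebraMap R A (r i)) Q = algebraMap R A (aeval r Q) := fun Q => by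
    rw [show (fun i => algebraMap R A (r i)) = algebraMap R A ∘ r from rfl,
      aeval_algebraMap_apply]
  -- gradient expansion
  have grad : ∀ i : Fin N,
      aeval (fun i' : Fin N =>
          algebraMap R A (r i') + ∑ α : Fin n, ε α * algebraMap R A (t α i'))
        (pderiv i F)
      = algebraMap R A (D i)
        + ∑ α : Fin n, ε α * algebraMap R A (∑ j, t α j * aeval r (pderiv j (pderiv i F))) := by
    intro i
    rw [show (fun i' : Fin N =>
          algebraMap R A (r i') + ∑ α : Fin n, ε α * algebraMap R A (t α i'))
        = fun i' => algebraMap R A (r i') + δ i' from rfl]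
    rw [taylor1 _ _ hδnil, halg]
    congr 1
    simp only [halg, hδdef, Finset.sum_mul, map_sum, map_mul, Finset.mul_sum, mul_assoc]
    rw [Finset.sum_comm]
  -- symmetric Hessian identity
  have hsym : ∀ α : Fin n,
      (∑ i, s i * ∑ j, t α j * aeval r (pderiv j (pderiv i F))) = M α := by
    intro α
    rw [hMdef]
    simp only [Finset.mul_sum]
    refine Finset.sum_congr rfl fun i _ => Finset.sum_congr rfl fun j _ => ?_
    rw [pderiv_comm' j i]
    ring
  -- the four pieces
  have hterm1 : ∑ i, algebraMap R A (s i) * algebraMap R A (D i) = 0 := by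
    rw [show (∑ i, algebraMap R A (s i) * algebraMap R A (D i))
        = algebraMap R A (∑ i, s i * D i) from by
      rw [map_sum]; exact Finset.sum_congr rfl fun i _ => (map_mul _ _ _).symm]
    rw [hs, map_zero]
  have hterm2 : ∑ i, algebraMap R A (s i)
        * (∑ α, ε α * algebraMap R A (∑ j, t α j * aeval r (pderiv j (pderiv i F))))
      = ∑ α, ε α * algebraMap R A (M α) := by
    simp only [Finset.mul_sum]
    rw [Finset.sum_comm]
    refine Finset.sum_congr rfl fun α _ => ?_
    rw [← hsym α, map_sum, Finset.mul_sum]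
    refine Finset.sum_congr rfl fun i _ => ?_
    rw [map_mul]; ring
  have hterm3 : ∑ i, (∑ α, ε α * algebraMap R A (M α * w * D i)) * algebraMap R A (D i)
      = ∑ α, ε α * algebraMap R A (M α) := by
    simp only [Finset.sum_mul]
    rw [Finset.sum_comm]
    refine Finset.sum_congr rfl fun α _ => ?_
    rw [show (∑ i, ε α * algebraMap R A (M α * w * D i) * algebraMap R A (D i))
        = ε α * algebraMap R A (∑ i, M α * w * D i * D i) from by
      rw [map_sum, Finset.mul_sum]
      exact Finset.sum_congr rfl fun i _ => by simp only [map_mul]; ring]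
    have hmw : (∑ i, M α * w * D i * D i) = M α * (w * ∑ i, D i * D i) := by
      rw [Finset.mul_sum, Finset.mul_sum]
      exact Finset.sum_congr rfl fun i _ => by ring
    rw [hmw, hw, mul_one]
  have hterm4 : ∑ i, (∑ α, ε α * algebraMap R A (u α i)) * algebraMap R A (D i) = 0 := by
    simp only [Finset.sum_mul]
    rw [Finset.sum_comm]
    refine Finset.sum_eq_zero fun α _ => ?_
    rw [show (∑ i, ε α * algebraMap R A (u α i) * algebraMap R A (D i))
        = ε α * algebraMap R A (∑ i, u α i * D i) from by
      rw [map_sum, Finset.mul_sum]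
      exact Finset.sum_congr rfl fun i _ => by rw [map_mul]; ring]
    rw [hu α, map_zero, mul_zero]
  -- per-index expansion, killing nilpotent cross terms
  have split : ∀ i : Fin N,
      (algebraMap R A (s i)
        - ∑ α, ε α * algebraMap R A (M α * w * D i)
        + ∑ α, ε α * algebraMap R A (u α i))
      * (algebraMap R A (D i)
        + ∑ α, ε α * algebraMap R A (∑ j, t α j * aeval r (pderiv j (pderiv i F))))
      = algebraMap R A (s i) * algebraMap R A (D i)
        + algebraMap R A (s i)
            * (∑ α, ε α * algebraMap R A (∑ j, t α j * aeval r (pderiv j (pderiv i F))))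
        - (∑ α, ε α * algebraMap R A (M α * w * D i)) * algebraMap R A (D i)
        + (∑ α, ε α * algebraMap R A (u α i)) * algebraMap R A (D i) := by
    intro i
    have h1 := hnil (fun α => algebraMap R A (M α * w * D i))
      (fun α => algebraMap R A (∑ j, t α j * aeval r (pderiv j (pderiv i F))))
    have h2 := hnil (fun α => algebraMap R A (u α i))
      (fun α => algebraMap R A (∑ j, t α j * aeval r (pderiv j (pderiv i F))))
    linear_combination h2 - h1
  calc ∑ i : Fin N,
      (algebraMap R A (s i)
        - ∑ α : Fin n, ε α * algebraMap R A (M α * w * D i)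
        + ∑ α : Fin n, ε α * algebraMap R A (u α i))
      * aeval (fun i' : Fin N =>
            algebraMap R A (r i') + ∑ α : Fin n, ε α * algebraMap R A (t α i'))
          (pderiv i F)
      = ∑ i : Fin N,
        (algebraMap R A (s i) * algebraMap R A (D i)
          + algebraMap R A (s i)
              * (∑ α, ε α * algebraMap R A (∑ j, t α j * aeval r (pderiv j (pderiv i F))))
          - (∑ α, ε α * algebraMap R A (M α * w * D i)) * algebraMap R A (D i)
          + (∑ α, ε α * algebraMap R A (u α i)) * algebraMap R A (D i)) := by
        refine Finset.sum_congr rfl fun i _ => ?_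
        rw [grad i]
        exact split i
    _ = (∑ i, algebraMap R A (s i) * algebraMap R A (D i))
        + (∑ i, algebraMap R A (s i)
            * (∑ α, ε α * algebraMap R A (∑ j, t α j * aeval r (pderiv j (pderiv i F)))))
        - (∑ i, (∑ α, ε α * algebraMap R A (M α * w * D i)) * algebraMap R A (D i))
        + (∑ i, (∑ α, ε α * algebraMap R A (u α i)) * algebraMap R A (D i)) := by
        rw [Finset.sum_add_distrib, Finset.sum_sub_distrib, Finset.sum_add_distrib]
    _ = 0 := by rw [hterm1, hterm2, hterm3, hterm4]; ring
end
end

section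
/- For characteristic-zero K, any S_k-invariant element p of the degree-m graded component of Def_{n,k} (m ≤ k) can be written as p = (1/m!)·Σ T_{α_1...α_m} (Σ_i ε_i^{α_1})···(Σ_i ε_i^{α_m}) where T is the (fully symmetric) coefficient tensor T^{1,...,m}_{α_1,...,α_m} of p on the basis monomials ε_1^{α_1}···ε_m^{α_m}. -/
open MvPolynomial

noncomputable section

variable (K : Type*) [Field K]

namespace Stmt18

open scoped Classical

variable {n k m : ℕ}

/-- exponent of the squarefree monomial with variables `u j` -/
def dof (u : Fin m → Fin k × Fin n) : (Fin k × Fin n) →₀ ℕ :=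
  ∑ j, Finsupp.single (u j) 1

lemma dof_apply (u : Fin m → Fin k × Fin n) (x : Fin k × Fin n) :
    dof u x = ∑ j, if u j = x then 1 else 0 := by
  simp [dof, Finset.sum_apply', Finsupp.single_apply]

lemma dof_apply_self {u : Fin m → Fin k × Fin n} (hu : Function.Injective u) (j : Fin m) :
    dof u (u j) = 1 := by
  rw [dof_apply]
  simp [hu.eq_iff]

lemma dof_eq_iff {u v : Fin m → Fin k × Fin n} (hu : Function.Injective u)
    (hv : Function.Injective v) :
    dof u = dof v ↔ ∃ τ : Equiv.Perm (Fin m), ∀ j, v j = u (τ j) := by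
  constructor
  · intro h
    have hex : ∀ j, ∃ j', u j' = v j := by
      intro j
      have h1 : dof u (v j) = 1 := by rw [h]; exact dof_apply_self hv j
      rw [dof_apply] at h1
      by_contra hc
      push_neg at hc
      simp only [if_neg (hc _), Finset.sum_const_zero] at h1
      exact one_ne_zero h1.symm
    choose τ0 hτ0 using hex
    have hinj : Function.Injective τ0 := by
      intro a b hab
      apply hv
      rw [← hτ0 a, ← hτ0 b, hab]
    refine ⟨Equiv.ofBijective τ0 (Finite.injective_iff_bijective.mp hinj), fun j => ?_⟩
    exact (hτ0 j).symm
  · rintro ⟨τ, hτ⟩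
    unfold dof
    rw [← Equiv.sum_comp τ (fun j => Finsupp.single (u j) (1 : ℕ))]
    exact Finset.sum_congr rfl fun j _ => by rw [← hτ j]

/-- Row-degree at most one. -/
def Good (d : Fin k × Fin n →₀ ℕ) : Prop := ∀ i : Fin k, ∑ a : Fin n, d (i, a) ≤ 1

lemma good_dof {ι : Fin m → Fin k} (hι : Function.Injective ι) (α : Fin m → Fin n) :
    Good (dof (fun j => (ι j, α j))) := by
  intro i
  have : ∀ a : Fin n, dof (fun j => (ι j, α j)) (i, a)
      = ∑ j, if (ι j, α j) = (i, a) then 1 else 0 := fun a => dof_apply _ _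
  rw [Finset.sum_congr rfl fun a _ => this a, Finset.sum_comm]
  have h2 : ∀ j : Fin m, (∑ a : Fin n, if (ι j, α j) = (i, a) then 1 else 0)
      = if ι j = i then 1 else 0 := by
    intro j
    by_cases h : ι j = i
    · simp [Prod.ext_iff, h]
    · simp [Prod.ext_iff, h]
  rw [Finset.sum_congr rfl fun j _ => h2 j]
  by_cases hex : ∃ j0, ι j0 = i
  · obtain ⟨j0, hj0⟩ := hex
    have : ∀ j, (ι j = i) ↔ j = j0 := by
      intro j
      constructor
      · intro h; exact hι (h.trans hj0.symm)
      · rintro rfl; exact hj0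
    simp [this]
  · push_neg at hex
    simp [hex]

end Stmt18

namespace Stmt18
variable {K} {n k m : ℕ}

lemma good_mono {d e : Fin k × Fin n →₀ ℕ} (h : ∀ x, d x ≤ e x) (he : Good e) : Good d :=
  fun i => le_trans (Finset.sum_le_sum fun a _ => h (i, a)) (he i)

/-- The ideal of polynomials all of whose "good" coefficients vanish. -/
def Jid (K : Type*) [Field K] (n k : ℕ) : Ideal (MvPolynomial (Fin k × Fin n) K) where
  carrier := {x | ∀ d, Good d → coeff d x = 0}
  zero_mem' := by intro d _; simp
  add_mem' := by
    intro x y hx hy d hd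
    simp [coeff_add, hx d hd, hy d hd]
  smul_mem' := by
    intro r x hx d hd
    rw [smul_eq_mul, coeff_mul]
    refine Finset.sum_eq_zero fun z hz => ?_
    rw [Finset.HasAntidiagonal.mem_antidiagonal] at hz
    have h2 : Good z.2 := by
      refine good_mono (fun u => ?_) hd
      calc z.2 u ≤ z.1 u + z.2 u := Nat.le_add_left _ _
        _ = d u := by rw [← hz]; simp
    rw [hx z.2 h2, mul_zero]

lemma X_mul_X (u v : Fin k × Fin n) :
    (X u * X v : MvPolynomial (Fin k × Fin n) K)
      = monomial (Finsupp.single u 1 + Finsupp.single v 1) 1 := by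
  rw [← pow_one (X u), ← pow_one (X v), X_pow_eq_monomial, X_pow_eq_monomial,
    monomial_mul, one_mul]

lemma defIdeal_le_Jid : defIdeal K n k ≤ Jid K n k := by
  rw [defIdeal, Ideal.span_le]
  rintro x ⟨i, a, b, rfl⟩
  intro d hd
  rw [X_mul_X, coeff_monomial]
  split_ifs with h
  · exfalso
    have h2 := hd i
    rw [← h] at h2
    have hval : ∀ c : Fin n,
        ((Finsupp.single ((i, a) : Fin k × Fin n) 1 + Finsupp.single ((i, b) : Fin k × Fin n) 1 :
            Fin k × Fin n →₀ ℕ)) (i, c)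
          = (if a = c then 1 else 0) + (if b = c then 1 else 0) := by
      intro c
      rw [Finsupp.add_apply, Finsupp.single_apply, Finsupp.single_apply]
      simp [Prod.ext_iff]
    rw [Finset.sum_congr rfl fun c _ => hval c, Finset.sum_add_distrib] at h2
    simp at h2
  · rfl

lemma coeff_congr_of_mk_eq {x y : MvPolynomial (Fin k × Fin n) K}
    (h : Ideal.Quotient.mk (defIdeal K n k) x = Ideal.Quotient.mk (defIdeal K n k) y)
    {d : Fin k × Fin n →₀ ℕ} (hd : Good d) : coeff d x = coeff d y := by
  rw [Ideal.Quotient.eq] at h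
  have := defIdeal_le_Jid h d hd
  rw [coeff_sub, sub_eq_zero] at this
  exact this

lemma prod_X_eq (g : Fin m → Fin k × Fin n) :
    (∏ j, (X (g j) : MvPolynomial (Fin k × Fin n) K)) = monomial (dof g) 1 := by
  rw [dof]
  induction (Finset.univ : Finset (Fin m)) using Finset.induction with
  | empty => simp
  | insert _ _ h ih =>
    rw [Finset.prod_insert h, Finset.sum_insert h, ih, ← pow_one (X (g _)),
      X_pow_eq_monomial, monomial_mul, one_mul]

lemma eps_prod (u : Fin m → Fin k) (β : Fin m → Fin n) :
    (∏ j, eps K (u j) (β j))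
      = Ideal.Quotient.mk (defIdeal K n k) (monomial (dof fun j => (u j, β j)) 1) := by
  rw [← prod_X_eq, map_prod]
  rfl

lemma eps_sq (i : Fin k) (a b : Fin n) : eps K i a * eps K i b = 0 := by
  have hmem : (X (i, a) * X (i, b) : MvPolynomial (Fin k × Fin n) K) ∈ defIdeal K n k :=
    Ideal.subset_span ⟨i, a, b, rfl⟩
  calc eps K i a * eps K i b
      = Ideal.Quotient.mk (defIdeal K n k) (X (i, a) * X (i, b)) := by rw [map_mul]; rfl
    _ = 0 := Ideal.Quotient.eq_zero_iff_mem.mpr hmem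

end Stmt18

namespace Stmt18
open scoped Classical
variable {K} {n k m : ℕ}

lemma pair_inj {ι : Fin m → Fin k} (hι : Function.Injective ι) (α : Fin m → Fin n) :
    Function.Injective (fun j => ((ι j, α j) : Fin k × Fin n)) := by
  intro a b hab
  exact hι (congrArg Prod.fst hab)

lemma strictMono_comp_perm_eq {ι ι' : Fin m → Fin k} (hι : StrictMono ι) (hι' : StrictMono ι')
    (τ : Equiv.Perm (Fin m)) (h : ∀ j, ι' j = ι (τ j)) : ι' = ι ∧ ∀ j, τ j = j := by
  have hcomp : ι' = ι ∘ τ := funext h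
  have hrange : Set.range ι' = Set.range ι := by
    rw [hcomp, Set.range_comp, Equiv.range_eq_univ, Set.image_univ]
  haveI inst : WellFoundedLT (Fin m) := inferInstance
  have heq : ι' = ι := (@StrictMono.range_inj (Fin m) (Fin k) _ _ inst ι' ι hι' hι).mp hrange
  refine ⟨heq, fun j => ?_⟩
  apply hι.injective
  rw [← h j, heq]

/-- collapse a double sum with an indicator with unique support -/
lemma double_sum_ite {A B : Type*} [Fintype B] (s : Finset A)
    (F : A → B → K) (c : A → B → Prop) [∀ a b, Decidable (c a b)]
    (a₀ : A) (ha₀ : a₀ ∈ s) (b₀ : B)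
    (h : ∀ a ∈ s, ∀ b, c a b ↔ (a = a₀ ∧ b = b₀)) :
    (∑ a ∈ s, ∑ b, (if c a b then F a b else 0)) = F a₀ b₀ := by
  rw [Finset.sum_eq_single_of_mem a₀ ha₀]
  · rw [Finset.sum_eq_single b₀]
    · rw [if_pos]
      rw [h a₀ ha₀ b₀]
      exact ⟨rfl, rfl⟩
    · intro b _ hb
      rw [if_neg]
      rw [h a₀ ha₀ b]
      rintro ⟨-, rfl⟩
      exact hb rfl
    · intro hb; exact absurd (Finset.mem_univ b₀) hb
  · intro a ha hne
    refine Finset.sum_eq_zero fun b _ => ?_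
    rw [if_neg]
    rw [h a ha b]
    rintro ⟨rfl, -⟩
    exact hne rfl

/-- any injective map `Fin m → Fin k` is `castLE` followed by a permutation -/
lemma exists_perm_extend (hm : m ≤ k) {f : Fin m → Fin k} (hf : Function.Injective f) :
    ∃ π : Equiv.Perm (Fin k), ∀ j, π (Fin.castLE hm j) = f j := by
  have hcast : Function.Injective (Fin.castLE hm) := (Fin.strictMono_castLE hm).injective
  let e : {x // x ∈ Set.range (Fin.castLE hm)} ≃ {x // x ∈ Set.range f} :=
    (Equiv.ofInjective _ hcast).symm.trans (Equiv.ofInjective f hf)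
  refine ⟨e.extendSubtype, fun j => ?_⟩
  rw [Equiv.extendSubtype_apply_of_mem e _ ⟨j, rfl⟩]
  have h1 : (⟨Fin.castLE hm j, ⟨j, rfl⟩⟩ : {x // x ∈ Set.range (Fin.castLE hm)})
      = Equiv.ofInjective _ hcast j := rfl
  simp only [e, Equiv.trans_apply, h1, Equiv.symm_apply_apply]
  rfl

end Stmt18

namespace Stmt18
open scoped Classical
variable {K} {n k m : ℕ}

lemma exists_sm_perm {f : Fin m → Fin k} (hf : Function.Injective f) :
    ∃ (ι : Fin m → Fin k) (σ : Equiv.Perm (Fin m)), StrictMono ι ∧ ι ∘ σ = f := by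
  have hcard : (Finset.univ.image f).card = m := by
    rw [Finset.card_image_of_injective _ hf, Finset.card_univ, Fintype.card_fin]
  set s := Finset.univ.image f with hs
  have hmem : ∀ j, f j ∈ s := fun j => Finset.mem_image_of_mem f (Finset.mem_univ j)
  set ι : Fin m → Fin k := ⇑(s.orderEmbOfFin hcard) with hι
  set τ0 : Fin m → Fin m := fun j => (s.orderIsoOfFin hcard).symm ⟨f j, hmem j⟩ with hτ0
  have hτι : ∀ j, ι (τ0 j) = f j := by
    intro j
    rw [hι, ← Finset.coe_orderIsoOfFin_apply s hcard (τ0 j), hτ0]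
    rw [OrderIso.apply_symm_apply]
  have hτinj : Function.Injective τ0 := by
    intro a b hab
    apply hf
    rw [← hτι a, ← hτι b, hab]
  exact ⟨ι, Equiv.ofBijective τ0 (Finite.injective_iff_bijective.mp hτinj),
    (s.orderEmbOfFin hcard).strictMono, funext fun j => hτι j⟩

lemma sum_injective_eq {M : Type*} [AddCommMonoid M] (G : (Fin m → Fin k) → M) :
    ∑ f ∈ Finset.univ.filter (fun f : Fin m → Fin k => Function.Injective f), G f
      = ∑ ι ∈ Finset.univ.filter (fun f : Fin m → Fin k => StrictMono f),
          ∑ σ : Equiv.Perm (Fin m), G (ι ∘ σ) := by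
  rw [← Finset.sum_product']
  have himg : ((Finset.univ.filter (fun f : Fin m → Fin k => StrictMono f)) ×ˢ
        (Finset.univ : Finset (Equiv.Perm (Fin m)))).image
          (fun q : (Fin m → Fin k) × Equiv.Perm (Fin m) => q.1 ∘ ⇑q.2)
      = Finset.univ.filter (fun f : Fin m → Fin k => Function.Injective f) := by
    ext f
    simp only [Finset.mem_image, Finset.mem_product, Finset.mem_filter, Finset.mem_univ,
      true_and, and_true]
    constructor
    · rintro ⟨⟨ι, σ⟩, hsm, rfl⟩
      exact hsm.injective.comp σ.injective
    · intro hf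
      obtain ⟨ι, σ, hsm, hcomp⟩ := exists_sm_perm hf
      exact ⟨(ι, σ), hsm, hcomp⟩
  rw [← himg, Finset.sum_image]
  rintro ⟨ι, σ⟩ hq ⟨ι', σ'⟩ hq' hcomp
  simp only [Finset.mem_coe, Finset.mem_product, Finset.mem_filter, Finset.mem_univ, true_and, and_true] at hq hq'
  have hτ : ∀ j, ι' j = ι ((σ'.symm.trans σ) j) := by
    intro j
    have h1 := congrFun hcomp (σ'.symm j)
    simp only [Function.comp_apply, Equiv.trans_apply] at h1 ⊢
    rw [h1, Equiv.apply_symm_apply]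

  obtain ⟨hιeq, hid⟩ := strictMono_comp_perm_eq hq hq' (σ'.symm.trans σ) hτ
  have hσeq : σ = σ' := by
    apply Equiv.ext
    intro j
    have := hid (σ' j)
    simpa using this
  rw [Prod.mk.injEq]
  exact ⟨hιeq.symm, hσeq⟩

end Stmt18

namespace Stmt18
open scoped Classical
variable {K} {n k m : ℕ}

lemma coeff_sum_sum {A B : Type*} [Fintype B] (s : Finset A) (g : A → B → K)
    (D : A → B → (Fin k × Fin n →₀ ℕ)) (d : Fin k × Fin n →₀ ℕ) :
    coeff d (∑ a ∈ s, ∑ b : B, g a b • monomial (D a b) (1 : K))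
      = ∑ a ∈ s, ∑ b : B, (if D a b = d then g a b else 0) := by
  rw [coeff_sum]
  refine Finset.sum_congr rfl fun a _ => ?_
  rw [coeff_sum]
  refine Finset.sum_congr rfl fun b _ => ?_
  rw [coeff_smul, coeff_monomial]
  split_ifs with h
  · rw [smul_eq_mul, mul_one]
  · rw [smul_eq_mul, mul_zero]

end Stmt18


open scoped Classical in
/-- for `char K = 0`, any `S_k`-invariant element `p` of the degree-`m`
graded component of `Def_{n,k}` (`m ≤ k`), with coefficient tensor `T`, equals
`(1/m!) Σ_α T_{α_1…α_m} (Σ_i ε_i^{α_1})⋯(Σ_i ε_i^{α_m})` where `T` is taken at the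
upper index set `{1,…,m}`. -/
theorem stmt18 (n k m : ℕ) [CharZero K] (hm : m ≤ k)
    (T : (Fin m → Fin k) → (Fin m → Fin n) → K) (p : DefR K n k)
    (hpdef : p = ∑ ι ∈ Finset.univ.filter (fun f : Fin m → Fin k => StrictMono f),
        ∑ α : Fin m → Fin n, T ι α • ∏ j : Fin m, eps K (ι j) (α j))
    (action : Equiv.Perm (Fin k) → (DefR K n k →ₐ[K] DefR K n k))
    (haction : ∀ (σ : Equiv.Perm (Fin k)) (i : Fin k) (a : Fin n),
      action σ (eps K i a) = eps K (σ i) a)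
    (hinv : ∀ σ : Equiv.Perm (Fin k), action σ p = p) :
    p = ((Nat.factorial m : K))⁻¹ • ∑ α : Fin m → Fin n,
        T (Fin.castLE hm) α • ∏ j : Fin m, ∑ i : Fin k, eps K i (α j) := by
  classical
  have hcsm : StrictMono (Fin.castLE hm) := Fin.strictMono_castLE hm
  set mkA := Ideal.Quotient.mkₐ K (defIdeal K n k) with hmkA
  have hmk_eq : ∀ x, mkA x = Ideal.Quotient.mk (defIdeal K n k) x := fun x => by
    rw [hmkA, Ideal.Quotient.mkₐ_eq_mk]
  set Q₀ : MvPolynomial (Fin k × Fin n) K :=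
    ∑ ι ∈ Finset.univ.filter (fun f : Fin m → Fin k => StrictMono f),
      ∑ α : Fin m → Fin n, T ι α • monomial (Stmt18.dof fun j => (ι j, α j)) (1 : K) with hQ₀def
  have hQ₀ : p = mkA Q₀ := by
    rw [hpdef, hQ₀def, map_sum]
    refine Finset.sum_congr rfl fun ι _ => ?_
    rw [map_sum]
    refine Finset.sum_congr rfl fun α _ => ?_
    rw [map_smul, hmk_eq, ← Stmt18.eps_prod]
  have hext : ∀ Q : MvPolynomial (Fin k × Fin n) K, mkA Q = p →
      ∀ (ι : Fin m → Fin k), Function.Injective ι → ∀ β : Fin m → Fin n,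
        coeff (Stmt18.dof fun j => (ι j, β j)) Q
          = coeff (Stmt18.dof fun j => (ι j, β j)) Q₀ := by
    intro Q hQ ι hι β
    refine Stmt18.coeff_congr_of_mk_eq ?_ (Stmt18.good_dof hι β)
    rw [← hmk_eq, ← hmk_eq, hQ, hQ₀]
  have hQ₀coeff : ∀ (ι : Fin m → Fin k), StrictMono ι → ∀ β : Fin m → Fin n,
      coeff (Stmt18.dof fun j => (ι j, β j)) Q₀ = T ι β := by
    intro ι hι β
    rw [hQ₀def, Stmt18.coeff_sum_sum]
    refine Stmt18.double_sum_ite _ T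
      (fun ι' α => Stmt18.dof (fun j => (ι' j, α j)) = Stmt18.dof (fun j => (ι j, β j)))
      ι (Finset.mem_filter.mpr ⟨Finset.mem_univ ι, hι⟩) β ?_
    intro ι' hι' α
    rw [Finset.mem_filter] at hι'
    constructor
    · intro h
      obtain ⟨τ, hτ⟩ := (Stmt18.dof_eq_iff (Stmt18.pair_inj hι'.2.injective α)
        (Stmt18.pair_inj hι.injective β)).mp h
      have hfst : ∀ j, ι j = ι' (τ j) := fun j => congrArg Prod.fst (hτ j)
      have hsnd : ∀ j, β j = α (τ j) := fun j => congrArg Prod.snd (hτ j)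
      obtain ⟨hιeq, hid⟩ := Stmt18.strictMono_comp_perm_eq hι'.2 hι τ hfst
      refine ⟨hιeq.symm, ?_⟩
      funext j
      rw [hsnd j, hid j]
    · rintro ⟨rfl, rfl⟩
      rfl
  have hsym : ∀ (ι : Fin m → Fin k), StrictMono ι →
      ∀ (σ : Equiv.Perm (Fin m)) (γ : Fin m → Fin n),
        T (Fin.castLE hm) γ = T ι (fun j => γ (σ j)) := by
    intro ι hι σ γ
    obtain ⟨π₁, hπ₁⟩ := Stmt18.exists_perm_extend hm hι.injective
    obtain ⟨π₂, hπ₂⟩ := Stmt18.exists_perm_extend hm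
      (show Function.Injective (fun j => Fin.castLE hm (σ j)) from
        fun a b hab => σ.injective (hcsm.injective hab))
    set σh : Equiv.Perm (Fin k) := π₁.symm.trans π₂ with hσh_def
    have hσh : ∀ j, σh (ι j) = Fin.castLE hm (σ j) := by
      intro j
      rw [hσh_def]
      simp only [Equiv.trans_apply]
      rw [← hπ₁ j, Equiv.symm_apply_apply, hπ₂ j]
    set Q₂ : MvPolynomial (Fin k × Fin n) K :=
      ∑ ι' ∈ Finset.univ.filter (fun f : Fin m → Fin k => StrictMono f),
        ∑ α : Fin m → Fin n,
          T ι' α • monomial (Stmt18.dof fun j => (σh (ι' j), α j)) (1 : K) with hQ₂def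
    have hQ₂ : mkA Q₂ = p := by
      conv_rhs => rw [← hinv σh, hpdef]
      rw [hQ₂def, map_sum, map_sum]
      refine Finset.sum_congr rfl fun ι' _ => ?_
      rw [map_sum, map_sum]
      refine Finset.sum_congr rfl fun α _ => ?_
      rw [map_smul, map_smul, map_prod]
      congr 1
      rw [hmk_eq, ← Stmt18.eps_prod]
      refine Finset.prod_congr rfl fun j _ => ?_
      rw [haction]
    have hco := hext Q₂ hQ₂ (Fin.castLE hm) hcsm.injective γ
    rw [hQ₀coeff _ hcsm γ, hQ₂def, Stmt18.coeff_sum_sum] at hco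
    rw [← hco]
    refine (Stmt18.double_sum_ite _ T
      (fun ι' α => Stmt18.dof (fun j => (σh (ι' j), α j))
        = Stmt18.dof (fun j => (Fin.castLE hm j, γ j)))
      ι (Finset.mem_filter.mpr ⟨Finset.mem_univ ι, hι⟩) (fun j => γ (σ j)) ?_)
    intro ι' hι' α
    rw [Finset.mem_filter] at hι'
    constructor
    · intro h
      obtain ⟨τ, hτ⟩ := (Stmt18.dof_eq_iff
        (Stmt18.pair_inj (fun a b hab => hι'.2.injective (σh.injective hab)) α)
        (Stmt18.pair_inj hcsm.injective γ)).mp h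
      have hfst : ∀ j, Fin.castLE hm j = σh (ι' (τ j)) := fun j => congrArg Prod.fst (hτ j)
      have hsnd : ∀ j, γ j = α (τ j) := fun j => congrArg Prod.snd (hτ j)
      have hι'ι : ∀ j, ι' (τ j) = ι (σ.symm j) := by
        intro j
        apply σh.injective
        rw [← hfst j, hσh (σ.symm j), Equiv.apply_symm_apply]
      have hρ : ∀ x, ι' x = ι ((τ.symm.trans σ.symm) x) := by
        intro x
        have := hι'ι (τ.symm x)
        simpa using this
      obtain ⟨hιeq, hid⟩ := Stmt18.strictMono_comp_perm_eq hι hι'.2 (τ.symm.trans σ.symm) hρ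
      have hτσ : ∀ x, τ.symm x = σ x := by
        intro x
        have h2 := hid x
        simp only [Equiv.trans_apply] at h2
        apply σ.symm.injective
        rw [h2, Equiv.symm_apply_apply]
      refine ⟨hιeq, ?_⟩
      funext x
      have h3 := hsnd (τ.symm x)
      rw [Equiv.apply_symm_apply] at h3
      rw [← h3, hτσ x]
    · rintro ⟨rfl, rfl⟩
      refine (Stmt18.dof_eq_iff
        (Stmt18.pair_inj (fun a b hab => hι'.2.injective (σh.injective hab)) _)
        (Stmt18.pair_inj hcsm.injective γ)).mpr ⟨σ.symm, fun j => ?_⟩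
      have h4 := hσh (σ.symm j)
      rw [Equiv.apply_symm_apply] at h4
      rw [h4, Equiv.apply_symm_apply]
  -- expansion of the product of sums
  have hexp : ∀ a : Fin m → Fin n, (∏ j : Fin m, ∑ i : Fin k, eps K i (a j))
      = ∑ f ∈ Finset.univ.filter (fun f : Fin m → Fin k => Function.Injective f),
          ∏ j : Fin m, eps K (f j) (a j) := by
    intro a
    rw [Finset.prod_univ_sum, Fintype.piFinset_univ,
      ← Finset.sum_filter_add_sum_filter_not Finset.univ
        (fun f : Fin m → Fin k => Function.Injective f)]
    have hz : ∑ f ∈ Finset.univ.filter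
        (fun f : Fin m → Fin k => ¬ Function.Injective f),
        ∏ j : Fin m, eps K (f j) (a j) = 0 := by
      refine Finset.sum_eq_zero fun f hf => ?_
      rw [Finset.mem_filter] at hf
      obtain ⟨j₁, j₂, hj, hne⟩ := Function.not_injective_iff.mp hf.2
      rw [← Finset.mul_prod_erase Finset.univ _ (Finset.mem_univ j₁),
        ← Finset.mul_prod_erase _ _
          (Finset.mem_erase.mpr ⟨Ne.symm hne, Finset.mem_univ j₂⟩),
        ← mul_assoc, hj, Stmt18.eps_sq, zero_mul]
    rw [hz, add_zero]
  have hq : (∑ α : Fin m → Fin n,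
        T (Fin.castLE hm) α • ∏ j : Fin m, ∑ i : Fin k, eps K i (α j))
      = m.factorial • p := by
    calc ∑ α : Fin m → Fin n,
          T (Fin.castLE hm) α • ∏ j : Fin m, ∑ i : Fin k, eps K i (α j)
        = ∑ α : Fin m → Fin n,
            ∑ f ∈ Finset.univ.filter (fun f : Fin m → Fin k => Function.Injective f),
              T (Fin.castLE hm) α • ∏ j : Fin m, eps K (f j) (α j) := by
          refine Finset.sum_congr rfl fun α _ => ?_
          rw [hexp α, Finset.smul_sum]
      _ = ∑ f ∈ Finset.univ.filter (fun f : Fin m → Fin k => Function.Injective f),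
            ∑ α : Fin m → Fin n,
              T (Fin.castLE hm) α • ∏ j : Fin m, eps K (f j) (α j) := Finset.sum_comm
      _ = ∑ ι ∈ Finset.univ.filter (fun f : Fin m → Fin k => StrictMono f),
            ∑ σ : Equiv.Perm (Fin m), ∑ α : Fin m → Fin n,
              T (Fin.castLE hm) α • ∏ j : Fin m, eps K ((ι ∘ σ) j) (α j) :=
          Stmt18.sum_injective_eq _
      _ = ∑ ι ∈ Finset.univ.filter (fun f : Fin m → Fin k => StrictMono f),
            ∑ _σ : Equiv.Perm (Fin m), ∑ β : Fin m → Fin n,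
              T ι β • ∏ j : Fin m, eps K (ι j) (β j) := by
          refine Finset.sum_congr rfl fun ι hι => ?_
          rw [Finset.mem_filter] at hι
          refine Finset.sum_congr rfl fun σ _ => ?_
          refine Fintype.sum_bijective (fun β : Fin m → Fin n => fun j => β (σ.symm j))
            ⟨fun β₁ β₂ h12 => funext fun j => by
                have := congrFun h12 (σ j); simpa using this,
              fun β => ⟨fun j => β (σ j), funext fun j => by simp⟩⟩ _ _ ?_
          intro α
          have hpr := Equiv.prod_comp σ (fun j => eps K (ι j) (α (σ.symm j)))
          simp only [Equiv.symm_apply_apply] at hpr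
          rw [← hpr, hsym ι hι.2 σ.symm α]
          rfl
      _ = ∑ ι ∈ Finset.univ.filter (fun f : Fin m → Fin k => StrictMono f),
            m.factorial • ∑ β : Fin m → Fin n,
              T ι β • ∏ j : Fin m, eps K (ι j) (β j) := by
          refine Finset.sum_congr rfl fun ι _ => ?_
          rw [Finset.sum_const, Finset.card_univ, Fintype.card_perm, Fintype.card_fin]
      _ = m.factorial • ∑ ι ∈ Finset.univ.filter (fun f : Fin m → Fin k => StrictMono f),
            ∑ β : Fin m → Fin n, T ι β • ∏ j : Fin m, eps K (ι j) (β j) :=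
          (Finset.smul_sum).symm
      _ = m.factorial • p := by rw [← hpdef]
  rw [hq, ← Nat.cast_smul_eq_nsmul K, inv_smul_smul₀
    (Nat.cast_ne_zero.mpr (Nat.factorial_ne_zero m))]
end
end
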